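/- arXiv:2411.02111 — 3 statements merged into one kernel-verified Lean document; each statement's English description precedes it below -/
import Mathlib

section
/- Let G be a finite connected weighted graph and let e_i be a non-bridge edge of G with endpoints p_i, q_i and length L_i. Then for all vertices s, t of G: r_G(s,t) = (L_i/(L_i + R_i))·r_{G−e_i}(s,t) + (R_i/(L_i + R_i))·r_{Ḡ_i}(s,t). -/
open scoped Classical

/-- A finite weighted multigraph (resistive electrical network): finitely many
vertices and edges; each edge `e` has two endpoints `ends e` and a positive
length (resistance) `len e`.  Multiple edges and self-loops are allowed. -/
structure WMG where
  V : Type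
  E : Type
  instV : Fintype V
  instE : Fintype E
  ends : E → V × V
  len : E → ℝ
  len_pos : ∀ e, 0 < len e

attribute [instance] WMG.instV WMG.instE

/-- The Moore–Penrose pseudoinverse of a real square matrix, characterized by
the four Penrose equations (it exists and is unique for real matrices). -/
noncomputable def Matrix.mpinv {n : Type} [Fintype n] (A : Matrix n n ℝ) : Matrix n n ℝ :=
  if h : ∃ B : Matrix n n ℝ,
      A * B * A = A ∧ B * A * B = B ∧ Matrix.transpose (A * B) = A * B ∧ Matrix.transpose (B * A) = B * A
  then h.choose else 0

namespace WMG

/-- Indicator function. -/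
noncomputable def ind {α : Type} (x y : α) : ℝ := if x = y then 1 else 0

/-- The weighted Laplacian: an edge `e` with endpoints `a, b` contributes
`(1/len e) * (δ_{ua} - δ_{ub}) * (δ_{va} - δ_{vb})` to the `(u,v)` entry.  So
the off-diagonal `(u,v)` entry is `-∑ 1/len e` over the edges joining `u` and
`v`, and all row sums are zero. -/
noncomputable def lap (G : WMG) : Matrix G.V G.V ℝ :=
  ∑ e : G.E, (G.len e)⁻¹ •
    Matrix.of (fun u v : G.V =>
      (ind u (G.ends e).1 - ind u (G.ends e).2) *
      (ind v (G.ends e).1 - ind v (G.ends e).2))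

/-- Effective resistance `r(p,q) = L⁺pp - 2·L⁺pq + L⁺qq`. -/
noncomputable def res (G : WMG) (p q : G.V) : ℝ :=
  G.lap.mpinv p p - 2 * G.lap.mpinv p q + G.lap.mpinv q q

/-- Voltage function `j_p(q,s) = L⁺pp - L⁺pq - L⁺ps + L⁺qs`. -/
noncomputable def volt (G : WMG) (p q s : G.V) : ℝ :=
  G.lap.mpinv p p - G.lap.mpinv p q - G.lap.mpinv p s + G.lap.mpinv q s

/-- Two vertices are adjacent if some edge has them as its endpoints. -/
def Adj (G : WMG) (u v : G.V) : Prop :=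
  ∃ e : G.E, G.ends e = (u, v) ∨ G.ends e = (v, u)

/-- `u` and `v` are joined by a walk in `G`. -/
def Reach (G : WMG) (u v : G.V) : Prop := Relation.ReflTransGen G.Adj u v

/-- `G` is connected. -/
def Connected (G : WMG) : Prop := Nonempty G.V ∧ ∀ u v : G.V, G.Reach u v

/-- Quotient graph: identify vertices along (the equivalence generated by) the
relation `r`; all edges are kept. -/
noncomputable def quot (G : WMG) (r : G.V → G.V → Prop) : WMG where
  V := Quot r
  E := G.E
  instV := Fintype.ofFinite _
  instE := G.instE
  ends e := (Quot.mk r (G.ends e).1, Quot.mk r (G.ends e).2)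
  len := G.len
  len_pos := G.len_pos

/-- The canonical map from the vertices of `G` to those of a quotient of `G`. -/
def quotMap (G : WMG) (r : G.V → G.V → Prop) : G.V → (G.quot r).V := Quot.mk r

/-- `G_{pq}`: identify the vertices `p` and `q`. -/
noncomputable def ident2 (G : WMG) (p q : G.V) : WMG :=
  G.quot (fun x y => x = p ∧ y = q)

def ident2Map (G : WMG) (p q : G.V) : G.V → (G.ident2 p q).V :=
  G.quotMap _

/-- `G_{pqs}`: identify the vertices `p`, `q`, `s` into a single vertex. -/
noncomputable def ident3 (G : WMG) (p q s : G.V) : WMG :=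
  G.quot (fun x y => (x = p ∧ y = q) ∨ (x = p ∧ y = s))

/-- `G_{pq,st}`: identify `p` with `q` and, separately, `s` with `t`. -/
noncomputable def ident22 (G : WMG) (p q s t : G.V) : WMG :=
  G.quot (fun x y => (x = p ∧ y = q) ∨ (x = s ∧ y = t))

/-- `G_S`: identify all vertices in the set `S` into a single vertex. -/
noncomputable def identSet (G : WMG) (S : Set G.V) : WMG :=
  G.quot (fun x y => x ∈ S ∧ y ∈ S)

/-- `G − e`: delete the edge `e` (keeping all vertices). -/
noncomputable def delete (G : WMG) (e : G.E) : WMG where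
  V := G.V
  E := {f : G.E // f ≠ e}
  instV := G.instV
  instE := Fintype.ofFinite _
  ends f := G.ends f.1
  len f := G.len f.1
  len_pos f := G.len_pos f.1

/-- `e` is a bridge if `G − e` is disconnected. -/
def IsBridge (G : WMG) (e : G.E) : Prop := ¬ (G.delete e).Connected

/-- `Ḡ_e`: contract the edge `e` (identify its endpoints and delete it). -/
noncomputable def contract (G : WMG) (e : G.E) : WMG :=
  (G.delete e).quot (fun x y => x = (G.ends e).1 ∧ y = (G.ends e).2)

def contractMap (G : WMG) (e : G.E) : G.V → (G.contract e).V := Quot.mk _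

/-- Replace the length of the edge `e` by `L'`. -/
noncomputable def setLen (G : WMG) (e : G.E) (L' : ℝ) (hL' : 0 < L') : WMG where
  V := G.V
  E := G.E
  instV := G.instV
  instE := G.instE
  ends := G.ends
  len f := if f = e then L' else G.len f
  len_pos f := by
    by_cases hf : f = e
    · simpa [hf] using hL'
    · simpa [hf] using G.len_pos f

/-- `T` is (the edge set of) a spanning tree of `G`: using only edges of `T`
any two vertices are joined, and `T` has (number of vertices) − 1 edges. -/
def IsSpanningTree (G : WMG) (T : Finset G.E) : Prop :=
  (∀ u v : G.V, Relation.ReflTransGen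
      (fun x y => ∃ e ∈ T, G.ends e = (x, y) ∨ G.ends e = (y, x)) u v) ∧
  T.card = Fintype.card G.V - 1

/-- `t G`: the number of spanning trees of `G` (equals `1` for a one-vertex
graph; self-loops contribute nothing). -/
noncomputable def t (G : WMG) : ℕ := Nat.card {T : Finset G.E // G.IsSpanningTree T}

/-- `t(G_{pq})`, with the convention `t(G_{pp}) = 0`. -/
noncomputable def t2 (G : WMG) (p q : G.V) : ℕ :=
  if p = q then 0 else (G.ident2 p q).t

/-- Disjoint union of two graphs. -/
noncomputable def disjUnion (G₁ G₂ : WMG) : WMG where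
  V := G₁.V ⊕ G₂.V
  E := G₁.E ⊕ G₂.E
  instV := inferInstance
  instE := inferInstance
  ends := Sum.elim (fun e => (Sum.inl (G₁.ends e).1, Sum.inl (G₁.ends e).2))
                   (fun e => (Sum.inr (G₂.ends e).1, Sum.inr (G₂.ends e).2))
  len := Sum.elim G₁.len G₂.len
  len_pos := by
    rintro (e | e)
    · exact G₁.len_pos e
    · exact G₂.len_pos e

/-- Glue `G₁` and `G₂` along two pairs of vertices (`p₁ ↔ p₂`, `q₁ ↔ q₂`):
the result is the graph `G = G₁ ∪ G₂` with `G₁ ∩ G₂ = {p, q}` (the two pieces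
share exactly these two vertices and no edges). -/
noncomputable def glue2 (G₁ G₂ : WMG) (p₁ q₁ : G₁.V) (p₂ q₂ : G₂.V) : WMG :=
  (G₁.disjUnion G₂).quot (fun x y =>
    (x = Sum.inl p₁ ∧ y = Sum.inr p₂) ∨ (x = Sum.inl q₁ ∧ y = Sum.inr q₂))

/-- Glue `G₁` and `G₂` along three pairs of vertices: the result is the graph
`G = G₁ ∪ G₂` with `G₁ ∩ G₂ = {p, q, s}`. -/
noncomputable def glue3 (G₁ G₂ : WMG) (p₁ q₁ s₁ : G₁.V) (p₂ q₂ s₂ : G₂.V) : WMG :=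
  (G₁.disjUnion G₂).quot (fun x y =>
    (x = Sum.inl p₁ ∧ y = Sum.inr p₂) ∨ (x = Sum.inl q₁ ∧ y = Sum.inr q₂) ∨
    (x = Sum.inl s₁ ∧ y = Sum.inr s₂))

/-- Disjoint union of a finite family of graphs. -/
noncomputable def sigmaGraph {k : ℕ} (G : Fin k → WMG) : WMG where
  V := Σ i, (G i).V
  E := Σ i, (G i).E
  instV := inferInstance
  instE := inferInstance
  ends e := (⟨e.1, ((G e.1).ends e.2).1⟩, ⟨e.1, ((G e.1).ends e.2).2⟩)
  len e := (G e.1).len e.2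
  len_pos e := (G e.1).len_pos e.2

/-- Glue the family `G i` along a common pair of vertices (all the `p i` are
identified together, and all the `q i` are identified together): the result is
`G = ⋃ G_i` with `G_i ∩ G_j = {p, q}` for all `i ≠ j`. -/
noncomputable def glueFam {k : ℕ} (G : Fin k → WMG) (p q : ∀ i, (G i).V) : WMG :=
  (sigmaGraph G).quot (fun x y =>
    (∃ i j, x = ⟨i, p i⟩ ∧ y = ⟨j, p j⟩) ∨ (∃ i j, x = ⟨i, q i⟩ ∧ y = ⟨j, q j⟩))

/-- The cyclic successor on `Fin k`. -/
def finSucc {k : ℕ} (i : Fin k) : Fin k :=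
  ⟨(i.1 + 1) % k, Nat.mod_lt _ (Nat.lt_of_le_of_lt (Nat.zero_le _) i.2)⟩

/-- `CG_k`: replace the `i`-th edge of the cycle `C_k` by the graph `G i`,
identifying `t i` (of `G i`) with `s (i+1)` (of `G (i+1)`), cyclically. -/
noncomputable def cycleGlue {k : ℕ} (G : Fin k → WMG) (s t : ∀ i, (G i).V) : WMG :=
  (sigmaGraph G).quot (fun x y =>
    ∃ i, x = ⟨i, t i⟩ ∧ y = ⟨finSucc i, s (finSucc i)⟩)

/-- Join a new vertex `u` (the vertex `none`) to the vertex `p i` of `H` by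
`a i` parallel unit edges, for each `i`.  The resulting graph `G` has `H = G − u`,
and if `p` is injective with all `a i ≥ 1` then `N_G(u) = {p 1, …, p n}` with
`a i` parallel edges joining `u` to `p i`. -/
noncomputable def cone (H : WMG) {n : ℕ} (p : Fin n → H.V) (a : Fin n → ℕ) : WMG where
  V := Option H.V
  E := H.E ⊕ (Σ i : Fin n, Fin (a i))
  instV := inferInstance
  instE := inferInstance
  ends := Sum.elim (fun e => (some (H.ends e).1, some (H.ends e).2))
                   (fun e => (none, some (p e.1)))
  len := Sum.elim H.len (fun _ => 1)
  len_pos := by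
    rintro (e | e)
    · exact H.len_pos e
    · exact one_pos

/-- The path graph `P_n` on `n` vertices `0, 1, …, n-1`, unit edge lengths. -/
noncomputable def path (n : ℕ) : WMG where
  V := Fin n
  E := Fin (n - 1)
  instV := inferInstance
  instE := inferInstance
  ends i := (⟨i.1, by have := i.2; omega⟩, ⟨i.1 + 1, by have := i.2; omega⟩)
  len _ := 1
  len_pos _ := one_pos

/-- The cycle graph `C_n` on `n` vertices, unit edge lengths. -/
noncomputable def cycle (n : ℕ) : WMG where
  V := Fin n
  E := Fin n
  instV := inferInstance
  instE := inferInstance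
  ends i := (i, finSucc i)
  len _ := 1
  len_pos _ := one_pos

/-- The modified fan graph `F̄an_n`: the path `P_n` together with one new hub
vertex joined to each path vertex by `a` parallel edges. -/
noncomputable def fanGraph (n a : ℕ) : WMG :=
  (path n).cone (fun i : Fin n => i) (fun _ => a)

/-- The modified wheel graph `W̄_n`: the cycle `C_n` together with one new hub
vertex joined to each cycle vertex by `a` parallel edges. -/
noncomputable def wheelGraph (n a : ℕ) : WMG :=
  (cycle n).cone (fun i : Fin n => i) (fun _ => a)

end WMG

/-- The Morgan–Voyce polynomial `B_m(x) = ∑_{k=0}^m C(m+k+1, m−k) x^k`. -/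
noncomputable def morganVoyce (m : ℕ) (x : ℝ) : ℝ :=
  ∑ k ∈ Finset.range (m + 1), (Nat.choose (m + k + 1) (m - k) : ℝ) * x ^ k

/-- The polynomial `W_m(x) = ∑_{k=0}^m ((2m+2)/(m+2+k)) C(m+2+k, m−k) x^k`. -/
noncomputable def wheelPoly (m : ℕ) (x : ℝ) : ℝ :=
  ∑ k ∈ Finset.range (m + 1),
    ((2 * m + 2 : ℝ) / (m + 2 + k : ℝ)) * (Nat.choose (m + 2 + k) (m - k) : ℝ) * x ^ k

/-- The Lucas numbers: `L₀ = 2`, `L₁ = 1`, `L_{m+2} = L_m + L_{m+1}`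
(so `L₂ = 3`). -/
def lucas : ℕ → ℕ
  | 0 => 2
  | 1 => 1
  | n + 2 => lucas n + lucas (n + 1)


/-!
Let `f` and `g` be potentials in `G − e` for unit currents from `s` to `t` and from `p` to `q`
(the ends of `e`): `L f = 𝟙_s − 𝟙_t` and `L g = 𝟙_p − 𝟙_q`. The kernel of the Laplacian of a
connected graph consists of the constants, so any such potential computes effective resistance:
`r(s,t) = f s − f t`, and `R = g p − g q`. Write `D = f p − f q`.
Putting `e` back, `f − D/(L+R) · g` is a potential for the unit current from `s` to `t` in `G`,
because the current `(D − D R/(L+R))/L` that it drives through `e` is exactly the `D/(L+R)` it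
injects at `p` and withdraws at `q`. Contracting `e`, `f − D/R · g` takes equal values at `p` and
`q`, so it descends to a potential on `Ḡ`. Hence `r_G(s,t) = (f s − f t) − D/(L+R)·(g s − g t)` and
`r_Ḡ(s,t) = (f s − f t) − D/R·(g s − g t)`, and eliminating `D·(g s − g t)` gives the claim.
-/

namespace Matrix

variable {n : Type} [Fintype n]

def IsPenroseInverse (A B : Matrix n n ℝ) : Prop :=
  A * B * A = A ∧ B * A * B = B ∧ (A * B)ᵀ = A * B ∧ (B * A)ᵀ = B * A

theorem IsPenroseInverse.unique {A B C : Matrix n n ℝ}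
    (hB : A.IsPenroseInverse B) (hC : A.IsPenroseInverse C) : B = C := by
  obtain ⟨hABA, hBAB, hAB, hBA⟩ := hB
  obtain ⟨hACA, hCAC, hAC, hCA⟩ := hC
  have hAB_eq : A * B = A * C :=
    calc A * B = Bᵀ * (A * C * A)ᵀ := by rw [hACA, ← transpose_mul, hAB]
      _ = (A * B)ᵀ * (A * C)ᵀ := by simp only [transpose_mul, Matrix.mul_assoc]
      _ = A * C := by rw [hAB, hAC, ← Matrix.mul_assoc, hABA]
  have hBA_eq : B * A = C * A :=
    calc B * A = (A * C * A)ᵀ * Bᵀ := by rw [hACA, ← transpose_mul, hBA]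
      _ = (C * A)ᵀ * (B * A)ᵀ := by simp only [transpose_mul, Matrix.mul_assoc]
      _ = C * A := by rw [hBA, hCA, Matrix.mul_assoc, ← Matrix.mul_assoc A, hABA]
  calc B = B * A * B := hBAB.symm
    _ = C * A * C := by rw [hBA_eq, Matrix.mul_assoc, hAB_eq, ← Matrix.mul_assoc]
    _ = C := hCAC

theorem IsPenroseInverse.transpose {A B : Matrix n n ℝ} (hA : A.IsSymm)
    (hB : A.IsPenroseInverse B) : A.IsPenroseInverse Bᵀ := by
  obtain ⟨hABA, hBAB, hAB, hBA⟩ := hB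
  have hAt : Aᵀ = A := hA
  refine ⟨?_, ?_, ?_, ?_⟩
  · simpa only [transpose_mul, hAt, Matrix.mul_assoc] using congrArg Matrix.transpose hABA
  · simpa only [transpose_mul, hAt, Matrix.mul_assoc] using congrArg Matrix.transpose hBAB
  · rw [transpose_mul, transpose_transpose, hAt, ← hAt, ← transpose_mul, hBA, hAt]
  · rw [transpose_mul, transpose_transpose, hAt, ← hAt, ← transpose_mul, hAB, hAt]

theorem exists_isPenroseInverse {A : Matrix n n ℝ} (hA : A.IsSymm) :
    ∃ B, A.IsPenroseInverse B := by
  obtain ⟨U, d, hUU, hA_eq⟩ : ∃ (U : Matrix n n ℝ) (d : n → ℝ),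
      Uᵀ * U = 1 ∧ A = U * diagonal d * Uᵀ := by
    have hH : A.IsHermitian := by rwa [IsHermitian, conjTranspose_eq_transpose_of_trivial]
    refine ⟨hH.eigenvectorUnitary, hH.eigenvalues, ?_, ?_⟩
    · simpa [star_eq_conjTranspose] using (mem_unitaryGroup_iff').mp hH.eigenvectorUnitary.2
    · simpa [star_eq_conjTranspose] using hH.spectral_theorem
  have conj_mul : ∀ d d' : n → ℝ, U * diagonal d * Uᵀ * (U * diagonal d' * Uᵀ)
      = U * diagonal (d * d') * Uᵀ := by
    intro d d'
    simp only [Matrix.mul_assoc]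
    rw [← Matrix.mul_assoc Uᵀ, hUU, Matrix.one_mul, ← Matrix.mul_assoc (diagonal d),
      diagonal_mul_diagonal]
    rfl
  have conj_symm : ∀ d : n → ℝ, (U * diagonal d * Uᵀ)ᵀ = U * diagonal d * Uᵀ := by
    intro d
    simp [transpose_mul, Matrix.mul_assoc]
  have inv_cancel : ∀ d : n → ℝ, d * d⁻¹ * d = d ∧ d⁻¹ * d * d⁻¹ = d⁻¹ := by
    intro d
    constructor <;> funext i <;> by_cases h : d i = 0 <;> simp [h]
  refine ⟨U * diagonal d⁻¹ * Uᵀ, ?_, ?_, ?_, ?_⟩ <;>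
    rw [hA_eq] <;> simp only [conj_mul, conj_symm, (inv_cancel _).1, (inv_cancel _).2]

theorem isPenroseInverse_mpinv {A : Matrix n n ℝ} (hA : A.IsSymm) :
    A.IsPenroseInverse A.mpinv := by
  have h := exists_isPenroseInverse hA
  unfold IsPenroseInverse at h ⊢
  rw [mpinv, dif_pos h]
  exact h.choose_spec

theorem isSymm_mpinv {A : Matrix n n ℝ} (hA : A.IsSymm) : A.mpinv.IsSymm :=
  ((isPenroseInverse_mpinv hA).transpose hA).unique (isPenroseInverse_mpinv hA)

theorem mul_mul_mpinv {A : Matrix n n ℝ} (hA : A.IsSymm) : A * (A * A.mpinv) = A := by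
  obtain ⟨hABA, -, hAB, -⟩ := isPenroseInverse_mpinv hA
  have hAt : Aᵀ = A := hA
  have hABAt := congrArg transpose hABA
  simp only [transpose_mul, hAt, ← Matrix.mul_assoc] at hABAt
  rwa [← hAB, transpose_mul, hAt, ← Matrix.mul_assoc]

end Matrix

namespace WMG

open Matrix

noncomputable def dipole {V : Type} (s t : V) : V → ℝ := fun v => ind v s - ind v t

theorem dipole_self {V : Type} (s : V) : dipole s s = 0 := by
  funext v
  simp [dipole]

section Dipole

variable {V : Type} [Fintype V]

theorem dipole_dotProduct (s t : V) (x : V → ℝ) : dipole s t ⬝ᵥ x = x s - x t := by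
  simp [dipole, dotProduct, ind, sub_mul, Finset.sum_sub_distrib]

theorem mulVec_dipole (M : Matrix V V ℝ) (s t v : V) :
    (M *ᵥ dipole s t) v = M v s - M v t := by
  simp [dipole, mulVec, dotProduct, ind, mul_sub, Finset.sum_sub_distrib]

theorem sum_dipole (s t : V) : ∑ v, dipole s t v = 0 := by
  simp [dipole, ind, Finset.sum_sub_distrib]

end Dipole

noncomputable def fiberSum {V W : Type} [Fintype V] (π : V → W) : (V → ℝ) →ₗ[ℝ] W → ℝ where
  toFun b x := ∑ v with π v = x, b v
  map_add' _ _ := funext fun _ => Finset.sum_add_distrib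
  map_smul' _ _ := funext fun _ => (Finset.mul_sum _ _ _).symm

theorem fiberSum_dipole {V W : Type} [Fintype V] (π : V → W) (s t : V) :
    fiberSum π (dipole s t) = dipole (π s) (π t) := by
  funext x
  simp [fiberSum, dipole, ind, Finset.sum_sub_distrib, eq_comm]

variable (G : WMG)

theorem lap_mulVec (x : G.V → ℝ) :
    G.lap *ᵥ x = ∑ e, ((G.len e)⁻¹ * (x (G.ends e).1 - x (G.ends e).2)) •
      dipole (G.ends e).1 (G.ends e).2 := by
  simp only [lap, sum_mulVec, smul_mulVec]
  refine Finset.sum_congr rfl fun e _ => ?_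
  change _ • (vecMulVec (dipole _ _) (dipole _ _) *ᵥ x) = _
  rw [vecMulVec_mulVec, op_smul_eq_smul, dipole_dotProduct, smul_smul]

theorem dotProduct_lap_mulVec_self (x : G.V → ℝ) :
    x ⬝ᵥ G.lap *ᵥ x = ∑ e, (G.len e)⁻¹ * (x (G.ends e).1 - x (G.ends e).2) ^ 2 := by
  rw [dotProduct_comm, lap_mulVec, sum_dotProduct]
  simp only [smul_dotProduct, dipole_dotProduct, smul_eq_mul, mul_assoc, sq]

theorem sum_lap_mulVec (x : G.V → ℝ) : ∑ v, (G.lap *ᵥ x) v = 0 := by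
  simp [lap_mulVec, Finset.sum_apply, Finset.sum_comm (γ := G.V), ← Finset.mul_sum, sum_dipole]

theorem dotProduct_lap_mulVec_self_nonneg (x : G.V → ℝ) : 0 ≤ x ⬝ᵥ G.lap *ᵥ x := by
  rw [dotProduct_lap_mulVec_self]
  exact Finset.sum_nonneg fun e _ => by have := G.len_pos e; positivity

theorem dotProduct_lap_mulVec_self_eq_zero_iff {x : G.V → ℝ} :
    x ⬝ᵥ G.lap *ᵥ x = 0 ↔ ∀ e, x (G.ends e).1 = x (G.ends e).2 := by
  rw [dotProduct_lap_mulVec_self, Finset.sum_eq_zero_iff_of_nonneg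
    fun e _ => by have := G.len_pos e; positivity]
  simp [(G.len_pos _).ne', sub_eq_zero]

theorem lap_mulVec_eq_zero_iff {x : G.V → ℝ} :
    G.lap *ᵥ x = 0 ↔ ∀ e, x (G.ends e).1 = x (G.ends e).2 := by
  refine ⟨fun hx => G.dotProduct_lap_mulVec_self_eq_zero_iff.1 ?_, fun hx => ?_⟩
  · rw [hx, dotProduct_zero]
  · simp [lap_mulVec, hx]

theorem lap_isSymm : G.lap.IsSymm := by
  simp only [IsSymm, lap, transpose_sum, transpose_smul]
  congr! 2 with e
  ext u v
  simp [mul_comm]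

theorem lap_mulVec_sub_eq_delete (e : G.E) (x : G.V → ℝ) :
    G.lap *ᵥ x - ((G.len e)⁻¹ * (x (G.ends e).1 - x (G.ends e).2)) •
      dipole (G.ends e).1 (G.ends e).2 = (G.delete e).lap *ᵥ x := by
  -- `(G.delete e).V` is `G.V` only after unfolding `delete`, hence `erw` here and below.
  erw [lap_mulVec, lap_mulVec (G.delete e)]
  refine sub_eq_iff_eq_add'.2 ((Finset.add_sum_erase _ _ (Finset.mem_univ e)).symm.trans ?_)
  exact congrArg _ (Finset.sum_subtype _ (by simp) _)

theorem quot_lap_mulVec (r : G.V → G.V → Prop) (u : (G.quot r).V → ℝ) :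
    (G.quot r).lap *ᵥ u = fiberSum (G.quotMap r) (G.lap *ᵥ (u ∘ G.quotMap r)) := by
  rw [lap_mulVec, lap_mulVec, map_sum]
  simp only [map_smul, fiberSum_dipole]
  rfl

variable {G}

theorem Connected.eq_of_lap_mulVec_eq_zero (hG : G.Connected) {x : G.V → ℝ}
    (hx : G.lap *ᵥ x = 0) (u v : G.V) : x u = x v := by
  induction hG.2 u v with
  | refl => rfl
  | tail _ hadj ih =>
    have h_edge := G.lap_mulVec_eq_zero_iff.1 hx
    rw [ih]
    obtain ⟨e, he | he⟩ := hadj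
    · simpa [he] using h_edge e
    · simpa [he] using (h_edge e).symm

theorem Connected.lap_mulVec_mpinv_mulVec (hG : G.Connected) {b : G.V → ℝ}
    (hb : ∑ v, b v = 0) : G.lap *ᵥ (G.lap.mpinv *ᵥ b) = b := by
  have : Nonempty G.V := hG.1
  obtain v₀ : G.V := Classical.arbitrary _
  set y := b - G.lap *ᵥ (G.lap.mpinv *ᵥ b)
  have hy_ker : G.lap *ᵥ y = 0 := by
    simp only [y, mulVec_sub, mulVec_mulVec, mul_mul_mpinv G.lap_isSymm, sub_self]
  have hy_sum : ∑ v, y v = 0 := by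
    simp only [y, Pi.sub_apply, Finset.sum_sub_distrib, hb, sum_lap_mulVec, sub_self]
  have hy_const : y = fun _ => y v₀ := funext fun v => hG.eq_of_lap_mulVec_eq_zero hy_ker v v₀
  have hy_zero : y v₀ = 0 := by
    rw [hy_const] at hy_sum
    simpa [Fintype.card_ne_zero] using hy_sum
  have : y = 0 := by rw [hy_const, hy_zero]; rfl
  exact (sub_eq_zero.1 this).symm

theorem Connected.exists_lap_mulVec_eq_dipole (hG : G.Connected) (s t : G.V) :
    ∃ f, G.lap *ᵥ f = dipole s t :=
  ⟨_, hG.lap_mulVec_mpinv_mulVec (sum_dipole s t)⟩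

theorem Connected.res_eq_sub (hG : G.Connected) {s t : G.V} {f : G.V → ℝ}
    (hf : G.lap *ᵥ f = dipole s t) : G.res s t = f s - f t := by
  set g := G.lap.mpinv *ᵥ dipole s t
  have hg : G.lap *ᵥ g = dipole s t := hG.lap_mulVec_mpinv_mulVec (sum_dipole s t)
  have hfg : (f - g) s = (f - g) t :=
    hG.eq_of_lap_mulVec_eq_zero (by rw [mulVec_sub, hf, hg, sub_self]) s t
  have h_symm : G.lap.mpinv t s = G.lap.mpinv s t := (isSymm_mpinv G.lap_isSymm).apply s t
  have hg_st : g s - g t = G.res s t := by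
    simp only [g, mulVec_dipole, res, h_symm]
    ring
  simp only [Pi.sub_apply] at hfg
  linarith

theorem Connected.res_pos (hG : G.Connected) {p q : G.V} (hpq : p ≠ q) : 0 < G.res p q := by
  obtain ⟨g, hg⟩ := hG.exists_lap_mulVec_eq_dipole p q
  have h_energy : G.res p q = g ⬝ᵥ G.lap *ᵥ g := by
    rw [hG.res_eq_sub hg, hg, dotProduct_comm, dipole_dotProduct]
  refine h_energy ▸ (G.dotProduct_lap_mulVec_self_nonneg g).lt_of_ne fun h_zero => ?_
  have hg_zero : G.lap *ᵥ g = 0 :=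
    G.lap_mulVec_eq_zero_iff.2 (G.dotProduct_lap_mulVec_self_eq_zero_iff.1 h_zero.symm)
  simpa [hg, dipole, ind, hpq] using congrFun hg_zero p

theorem Connected.quot (hG : G.Connected) (r : G.V → G.V → Prop) : (G.quot r).Connected := by
  refine ⟨hG.1.map (Quot.mk r), fun x y => ?_⟩
  obtain ⟨u, rfl⟩ := Quot.exists_rep x
  obtain ⟨v, rfl⟩ := Quot.exists_rep y
  refine (hG.2 u v).lift (Quot.mk r) fun a b ⟨e, he⟩ => ⟨e, ?_⟩
  rcases he with he | he <;> simp [WMG.quot, he]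

section Potentials

variable {e : G.E} {s t : G.V} {f g : G.V → ℝ}

theorem Connected.res_eq_of_delete_potentials (hG : G.Connected)
    (hf : (G.delete e).lap *ᵥ f = dipole s t)
    (hg : (G.delete e).lap *ᵥ g = dipole (G.ends e).1 (G.ends e).2)
    (hLR : G.len e + (g (G.ends e).1 - g (G.ends e).2) ≠ 0) :
    G.res s t = f s - f t - (f (G.ends e).1 - f (G.ends e).2) /
      (G.len e + (g (G.ends e).1 - g (G.ends e).2)) * (g s - g t) := by
  set α := (f (G.ends e).1 - f (G.ends e).2) / (G.len e + (g (G.ends e).1 - g (G.ends e).2))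
  have h_coeff : (G.len e)⁻¹ * ((f - α • g) (G.ends e).1 - (f - α • g) (G.ends e).2) = α := by
    have := G.len_pos e
    simp only [Pi.sub_apply, Pi.smul_apply, smul_eq_mul, α]
    field_simp
    ring
  have h_delete :
      (G.delete e).lap *ᵥ (f - α • g) = dipole s t - α • dipole (G.ends e).1 (G.ends e).2 := by
    erw [mulVec_sub, mulVec_smul, hf, hg]
    rfl
  have h_lap : G.lap *ᵥ (f - α • g) = dipole s t := by
    have := G.lap_mulVec_sub_eq_delete e (f - α • g)
    rw [h_coeff, h_delete] at this
    simpa using this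
  rw [hG.res_eq_sub h_lap]
  simp only [Pi.sub_apply, Pi.smul_apply, smul_eq_mul]
  ring

theorem Connected.res_contract_eq_of_delete_potentials (hG' : (G.delete e).Connected)
    (hf : (G.delete e).lap *ᵥ f = dipole s t)
    (hg : (G.delete e).lap *ᵥ g = dipole (G.ends e).1 (G.ends e).2)
    (hR : g (G.ends e).1 - g (G.ends e).2 ≠ 0) :
    (G.contract e).res (G.contractMap e s) (G.contractMap e t) = f s - f t -
      (f (G.ends e).1 - f (G.ends e).2) / (g (G.ends e).1 - g (G.ends e).2) * (g s - g t) := by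
  set β := (f (G.ends e).1 - f (G.ends e).2) / (g (G.ends e).1 - g (G.ends e).2)
  set w := f - β • g
  have hw : ∀ x y, x = (G.ends e).1 ∧ y = (G.ends e).2 → w x = w y := by
    rintro _ _ ⟨rfl, rfl⟩
    simp only [w, β, Pi.sub_apply, Pi.smul_apply, smul_eq_mul]
    field_simp
    ring
  have h_delete : (G.delete e).lap *ᵥ w = dipole s t - β • dipole (G.ends e).1 (G.ends e).2 := by
    erw [mulVec_sub, mulVec_smul, hf, hg]
    rfl
  have h_ends : G.contractMap e (G.ends e).1 = G.contractMap e (G.ends e).2 :=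
    Quot.sound ⟨rfl, rfl⟩
  have h_lap : (G.contract e).lap *ᵥ (Quot.lift w hw : (G.contract e).V → ℝ) =
      dipole (G.contractMap e s) (G.contractMap e t) := by
    erw [quot_lap_mulVec]
    change fiberSum (G.contractMap e) ((G.delete e).lap *ᵥ w) = _
    refine (congrArg (fiberSum (G.contractMap e)) h_delete).trans ?_
    rw [map_sub, map_smul, fiberSum_dipole, fiberSum_dipole, h_ends, dipole_self,
      smul_zero, sub_zero]
  have hC : (G.contract e).Connected := hG'.quot _
  rw [hC.res_eq_sub h_lap]
  change w s - w t = _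
  simp only [w, Pi.sub_apply, Pi.smul_apply, smul_eq_mul]
  ring

end Potentials

end WMG

open WMG

/-- If the edge `e` (with endpoints `p_i, q_i` and length `L_i`) is not a
bridge of the finite connected weighted graph `G`, then for all vertices
`s, t`:
`r(s,t) = (L_i/(L_i+R_i)) r_{G-e}(s,t) + (R_i/(L_i+R_i)) r_{Ḡ_e}(s,t)`. -/
theorem res_convex_combination_of_delete_and_contract (G : WMG) (hG : G.Connected)
    (e : G.E) (he : ¬ G.IsBridge e) (s t : G.V) :
    G.res s t =
      (G.len e / (G.len e + (G.delete e).res (G.ends e).1 (G.ends e).2)) *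
        (G.delete e).res s t +
      ((G.delete e).res (G.ends e).1 (G.ends e).2 /
        (G.len e + (G.delete e).res (G.ends e).1 (G.ends e).2)) *
        (G.contract e).res (G.contractMap e s) (G.contractMap e t) := by
  have hG' : (G.delete e).Connected := not_not.mp he
  obtain ⟨f, hf⟩ := hG'.exists_lap_mulVec_eq_dipole s t
  obtain ⟨g, hg⟩ := hG'.exists_lap_mulVec_eq_dipole (G.ends e).1 (G.ends e).2
  have hL := G.len_pos e
  rw [hG'.res_eq_sub hf, hG'.res_eq_sub hg]
  by_cases hpq : (G.ends e).1 = (G.ends e).2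
  · rw [hG.res_eq_of_delete_potentials hf hg (by simp [hpq, hL.ne'])]
    simp [hpq, hL.ne']
  · have hR : 0 < g (G.ends e).1 - g (G.ends e).2 := hG'.res_eq_sub hg ▸ hG'.res_pos hpq
    rw [hG.res_eq_of_delete_potentials hf hg (by positivity),
      hG'.res_contract_eq_of_delete_potentials hf hg hR.ne']
    field_simp
    ring
end

section
/- (Euler's Formula for the Resistance Function II) Let G be a finite connected weighted graph in which each edge e_i has endpoints p_i, q_i and length L_i. Then for all vertices s, t of G: r(s,t) = (1/4)·Σ_{e_i ∈ E(G)} (1/L_i)·( r(p_i,s) − r(q_i,s) − r(p_i,t) + r(q_i,t) )². -/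
open scoped Classical

open Matrix

section Penrose

variable {n : Type} [Fintype n] [DecidableEq n]

private lemma exists_penrose (A : Matrix n n ℝ) (hA : A.IsHermitian) :
    ∃ B : Matrix n n ℝ,
      A * B * A = A ∧ B * A * B = B ∧ (A * B)ᵀ = A * B ∧ (B * A)ᵀ = B * A := by
  classical
  set U : Matrix n n ℝ := (hA.eigenvectorUnitary : Matrix n n ℝ) with hUdef
  have hU1 : star U * U = 1 := Unitary.coe_star_mul_self _
  set d : n → ℝ := hA.eigenvalues with hd
  have hspec : A = U * diagonal d * star U := by simpa using hA.spectral_theorem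
  have hmul : ∀ e f : n → ℝ, (U * diagonal e * star U) * (U * diagonal f * star U)
      = U * diagonal (fun i => e i * f i) * star U := by
    intro e f
    calc (U * diagonal e * star U) * (U * diagonal f * star U)
        = U * (diagonal e * (star U * U) * diagonal f) * star U := by
          simp only [Matrix.mul_assoc]
      _ = U * diagonal (fun i => e i * f i) * star U := by
          rw [hU1, Matrix.mul_one, diagonal_mul_diagonal]
  have htr : ∀ e : n → ℝ, (U * diagonal e * star U)ᵀ = U * diagonal e * star U := by
    intro e
    rw [transpose_mul, transpose_mul, diagonal_transpose,
      star_eq_conjTranspose, conjTranspose_eq_transpose_of_trivial, transpose_transpose]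
    simp [Matrix.mul_assoc]
  refine ⟨U * diagonal (fun i => (d i)⁻¹) * star U, ?_, ?_, ?_, ?_⟩
  · rw [hspec, hmul, hmul]
    have hfun : (fun i => d i * (d i)⁻¹ * d i) = d := by
      funext i
      rcases eq_or_ne (d i) 0 with h | h
      · simp [h]
      · field_simp
    rw [hfun]
  · rw [hspec, hmul, hmul]
    have hfun : (fun i => (d i)⁻¹ * d i * (d i)⁻¹) = fun i => (d i)⁻¹ := by
      funext i
      rcases eq_or_ne (d i) 0 with h | h
      · simp [h]
      · field_simp
    rw [hfun]
  · rw [hspec, hmul, htr]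
  · rw [hspec, hmul, htr]

private lemma penrose_unique (A B C : Matrix n n ℝ)
    (hB1 : A * B * A = A) (hB2 : B * A * B = B) (hB3 : (A * B)ᵀ = A * B)
    (hB4 : (B * A)ᵀ = B * A)
    (hC1 : A * C * A = A) (hC2 : C * A * C = C) (hC3 : (A * C)ᵀ = A * C)
    (hC4 : (C * A)ᵀ = C * A) :
    B = C := by
  have h1 : A * B = A * C := by
    calc A * B = (A * B)ᵀ := hB3.symm
      _ = Bᵀ * Aᵀ := transpose_mul _ _
      _ = Bᵀ * (A * C * A)ᵀ := by rw [hC1]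
      _ = Bᵀ * (Aᵀ * (A * C)ᵀ) := by rw [transpose_mul]
      _ = (Bᵀ * Aᵀ) * (A * C) := by rw [hC3, Matrix.mul_assoc]
      _ = (A * B)ᵀ * (A * C) := by rw [transpose_mul]
      _ = (A * B) * (A * C) := by rw [hB3]
      _ = (A * B * A) * C := by simp only [Matrix.mul_assoc]
      _ = A * C := by rw [hB1]
  have h2 : B * A = C * A := by
    calc B * A = (B * A)ᵀ := hB4.symm
      _ = Aᵀ * Bᵀ := transpose_mul _ _
      _ = (A * C * A)ᵀ * Bᵀ := by rw [hC1]
      _ = ((C * A)ᵀ * Aᵀ) * Bᵀ := by rw [Matrix.mul_assoc A C A, transpose_mul]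
      _ = (C * A) * (Aᵀ * Bᵀ) := by rw [hC4, Matrix.mul_assoc]
      _ = (C * A) * (B * A)ᵀ := by rw [transpose_mul]
      _ = (C * A) * (B * A) := by rw [hB4]
      _ = C * (A * B * A) := by simp only [Matrix.mul_assoc]
      _ = C * A := by rw [hB1]
  calc B = B * A * B := hB2.symm
    _ = B * (A * C) := by rw [Matrix.mul_assoc, h1]
    _ = (B * A) * C := by rw [Matrix.mul_assoc]
    _ = (C * A) * C := by rw [h2]
    _ = C := hC2

end Penrose


section Main

open Matrix WMG

lemma WMG.lap_isHermitian (G : WMG) : G.lap.IsHermitian := by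
  show G.lapᴴ = G.lap
  rw [conjTranspose_eq_transpose_of_trivial]
  ext u v
  simp [WMG.lap, Matrix.sum_apply, mul_comm]

lemma WMG.mpinv_spec (G : WMG) :
    G.lap * G.lap.mpinv * G.lap = G.lap ∧ G.lap.mpinv * G.lap * G.lap.mpinv = G.lap.mpinv ∧
    (G.lap * G.lap.mpinv)ᵀ = G.lap * G.lap.mpinv ∧
    (G.lap.mpinv * G.lap)ᵀ = G.lap.mpinv * G.lap := by
  have hex := exists_penrose G.lap G.lap_isHermitian
  rw [Matrix.mpinv, dif_pos hex]
  exact hex.choose_spec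

lemma WMG.mpinv_symm (G : WMG) : ∀ u v, G.lap.mpinv u v = G.lap.mpinv v u := by
  set L := G.lap with hL
  set M := G.lap.mpinv with hM
  obtain ⟨h1, h2, h3, h4⟩ := G.mpinv_spec
  have hLs : Lᵀ = L := by
    have := G.lap_isHermitian
    rwa [Matrix.IsHermitian, conjTranspose_eq_transpose_of_trivial] at this
  have e1 : L * Mᵀ * L = L := by
    have : (L * M * L)ᵀ = Lᵀ * Mᵀ * Lᵀ := by
      rw [transpose_mul, transpose_mul]; simp only [Matrix.mul_assoc]
    rw [h1, hLs] at this
    exact this.symm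
  have e2 : Mᵀ * L * Mᵀ = Mᵀ := by
    have : (M * L * M)ᵀ = Mᵀ * Lᵀ * Mᵀ := by
      rw [transpose_mul, transpose_mul]; simp only [Matrix.mul_assoc]
    rw [h2, hLs] at this
    rw [← this]
  have e3 : (L * Mᵀ)ᵀ = L * Mᵀ := by
    have hLM : L * Mᵀ = (M * L)ᵀ := by rw [transpose_mul, hLs]
    calc (L * Mᵀ)ᵀ = ((M * L)ᵀ)ᵀ := by rw [hLM]
      _ = M * L := transpose_transpose _
      _ = (M * L)ᵀ := h4.symm
      _ = L * Mᵀ := hLM.symm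
  have e4 : (Mᵀ * L)ᵀ = Mᵀ * L := by
    have hML : Mᵀ * L = (L * M)ᵀ := by rw [transpose_mul, hLs]
    calc (Mᵀ * L)ᵀ = ((L * M)ᵀ)ᵀ := by rw [hML]
      _ = L * M := transpose_transpose _
      _ = (L * M)ᵀ := h3.symm
      _ = Mᵀ * L := hML.symm
  have := penrose_unique L M Mᵀ h1 h2 h3 h4 e1 e2 e3 e4
  intro u v
  conv_lhs => rw [this]
  rfl

theorem euler_formula_resistance_II' (G : WMG) (s t : G.V) :
    G.res s t = (1 / 4) * ∑ e : G.E, (1 / G.len e) *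
      (G.res (G.ends e).1 s - G.res (G.ends e).2 s -
       G.res (G.ends e).1 t + G.res (G.ends e).2 t) ^ 2 := by
  classical
  set L := G.lap with hL
  set M := G.lap.mpinv with hM
  have Msym : ∀ u v, M u v = M v u := fun u v => G.mpinv_symm u v
  set f : G.V → ℝ := fun p => M p s - M p t with hf
  -- pointwise identity for the summand
  have hterm : ∀ p q : G.V,
      G.res p s - G.res q s - G.res p t + G.res q t = -2 * (f p - f q) := by
    intro p q
    simp only [WMG.res, hf, ← hM]
    ring
  -- quadratic form identity
  have hsum_ind : ∀ (x : G.V → ℝ) (p : G.V), (∑ u, x u * WMG.ind u p) = x p := by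
    intro x p
    simp [WMG.ind, mul_ite]
  have hquad : ∀ x : G.V → ℝ,
      (∑ u, ∑ v, x u * L u v * x v)
        = ∑ e, (G.len e)⁻¹ * (x (G.ends e).1 - x (G.ends e).2) ^ 2 := by
    intro x
    have hLapp : ∀ u v : G.V, L u v = ∑ e : G.E, (G.len e)⁻¹ *
        ((WMG.ind u (G.ends e).1 - WMG.ind u (G.ends e).2) *
         (WMG.ind v (G.ends e).1 - WMG.ind v (G.ends e).2)) := by
      intro u v
      simp [hL, WMG.lap, Matrix.sum_apply]
    calc (∑ u, ∑ v, x u * L u v * x v)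
        = ∑ u, ∑ v, ∑ e : G.E, (G.len e)⁻¹ *
            ((x u * (WMG.ind u (G.ends e).1 - WMG.ind u (G.ends e).2)) *
             (x v * (WMG.ind v (G.ends e).1 - WMG.ind v (G.ends e).2))) := by
          refine Finset.sum_congr rfl fun u _ => Finset.sum_congr rfl fun v _ => ?_
          rw [hLapp u v, Finset.mul_sum, Finset.sum_mul]
          refine Finset.sum_congr rfl fun e _ => ?_
          ring
      _ = ∑ u, ∑ e : G.E, ∑ v, (G.len e)⁻¹ *
            ((x u * (WMG.ind u (G.ends e).1 - WMG.ind u (G.ends e).2)) *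
             (x v * (WMG.ind v (G.ends e).1 - WMG.ind v (G.ends e).2))) :=
          Finset.sum_congr rfl fun u _ => Finset.sum_comm
      _ = ∑ e : G.E, ∑ u, ∑ v, (G.len e)⁻¹ *
            ((x u * (WMG.ind u (G.ends e).1 - WMG.ind u (G.ends e).2)) *
             (x v * (WMG.ind v (G.ends e).1 - WMG.ind v (G.ends e).2))) :=
          Finset.sum_comm
      _ = ∑ e : G.E, (G.len e)⁻¹ *
            ((∑ u, x u * (WMG.ind u (G.ends e).1 - WMG.ind u (G.ends e).2)) *
             (∑ v, x v * (WMG.ind v (G.ends e).1 - WMG.ind v (G.ends e).2))) := by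
          refine Finset.sum_congr rfl fun e _ => ?_
          rw [Finset.sum_mul_sum, Finset.mul_sum]
          exact Finset.sum_congr rfl fun u _ => (Finset.mul_sum _ _ _).symm
      _ = ∑ e : G.E, (G.len e)⁻¹ * (x (G.ends e).1 - x (G.ends e).2) ^ 2 := by
          refine Finset.sum_congr rfl fun e _ => ?_
          have h1 : (∑ u, x u * (WMG.ind u (G.ends e).1 - WMG.ind u (G.ends e).2))
              = x (G.ends e).1 - x (G.ends e).2 := by
            simp only [mul_sub]
            rw [Finset.sum_sub_distrib, hsum_ind, hsum_ind]
          rw [h1]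
          ring
  -- entrywise M * L * M = M
  have hMLM : G.lap.mpinv * G.lap * G.lap.mpinv = G.lap.mpinv := G.mpinv_spec.2.1
  have hMLM' : ∀ a b : G.V, (∑ v, ∑ u, M a u * L u v * M v b) = M a b := by
    intro a b
    have h := congrFun (congrFun hMLM a) b
    calc (∑ v, ∑ u, M a u * L u v * M v b)
        = ∑ v, (∑ u, M a u * L u v) * M v b := by
          refine Finset.sum_congr rfl fun v _ => ?_
          rw [Finset.sum_mul]
      _ = (M * L * M) a b := by
          simp [Matrix.mul_apply, hL, hM]
      _ = M a b := by rw [hM, hL, hMLM]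
  -- put it together
  have key : (∑ e : G.E, (G.len e)⁻¹ * (f (G.ends e).1 - f (G.ends e).2) ^ 2)
      = G.res s t := by
    rw [← hquad f]
    rw [Finset.sum_comm]
    calc (∑ v, ∑ u, f u * L u v * f v)
        = ∑ v, ∑ u, (M s u * L u v * M v s - M s u * L u v * M v t
            - M t u * L u v * M v s + M t u * L u v * M v t) := by
          refine Finset.sum_congr rfl fun v _ => Finset.sum_congr rfl fun u _ => ?_
          simp only [hf]
          rw [Msym u s, Msym u t]
          ring
      _ = (∑ v, ∑ u, M s u * L u v * M v s) - (∑ v, ∑ u, M s u * L u v * M v t)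
          - (∑ v, ∑ u, M t u * L u v * M v s) + (∑ v, ∑ u, M t u * L u v * M v t) := by
          simp only [Finset.sum_sub_distrib, Finset.sum_add_distrib]
      _ = M s s - M s t - M t s + M t t := by
          rw [hMLM' s s, hMLM' s t, hMLM' t s, hMLM' t t]
      _ = G.res s t := by
          simp only [WMG.res, ← hM]
          rw [Msym t s]
          ring
  calc G.res s t
      = ∑ e : G.E, (G.len e)⁻¹ * (f (G.ends e).1 - f (G.ends e).2) ^ 2 := key.symm
    _ = (1 / 4) * ∑ e : G.E, (1 / G.len e) *
        (G.res (G.ends e).1 s - G.res (G.ends e).2 s -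
         G.res (G.ends e).1 t + G.res (G.ends e).2 t) ^ 2 := by
        rw [Finset.mul_sum]
        refine Finset.sum_congr rfl fun e _ => ?_
        rw [hterm]
        field_simp
        ring

end Main

/-- **Euler's Formula for the Resistance Function II.**  For vertices `s, t`
of a finite connected weighted graph `G`:
`r(s,t) = (1/4) ∑_{e ∈ E(G)} (1/L_e) (r(p_e,s) - r(q_e,s) - r(p_e,t) + r(q_e,t))²`. -/
theorem euler_formula_resistance_II (G : WMG) (hG : G.Connected) (s t : G.V) :
    G.res s t = (1 / 4) * ∑ e : G.E, (1 / G.len e) *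
      (G.res (G.ends e).1 s - G.res (G.ends e).2 s -
       G.res (G.ends e).1 t + G.res (G.ends e).2 t) ^ 2 := by
  exact euler_formula_resistance_II' G s t
end

section
/- Let G = G₁ ∪ G₂ be a connected multigraph which is the union of two subgraphs G₁ and G₂ with G₁ ∩ G₂ = {p, q} for two vertices p, q. Then t(G) = t(G₁)·t(G₂,_{pq}) + t(G₂)·t(G₁,_{pq}), where G_j,_{pq} is obtained from G_j by identifying the vertices p and q. -/
open scoped Classical

/-!
Split an edge set of `G = G₁ ∪ G₂` as `T₁ ⊔ T₂` with `Tᵢ ⊆ E(Gᵢ)`. If `T` is a spanning tree of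
`G`, then collapsing `G₂` onto `p` shows that `T₁` connects `G₁,pq`, and likewise `T₂` connects
`G₂,pq`. A walk of `T` from `p` to `q` can only change pieces at `p` or `q`, so `p` and `q` are
already joined inside one piece, say by `T₁`; then `T₁` connects `G₁`. Since
`|T| = |V₁| + |V₂| - 3`, while connecting `G₁` and `G₂,pq` needs at least `|V₁| - 1` and
`|V₂| - 2` edges, `T₁` and `T₂` are spanning trees of `G₁` and `G₂,pq`. Conversely such a pair
glues to a spanning tree of `G`. The two alternatives exclude each other by the edge count of
`T₁`, so `t(G)` is the sum of the two products.
-/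

theorem Nat.card_quot_eq_card_fixed {α : Type*} {r : α → α → Prop} (g : α → α)
    (hg : ∀ a b, r a b → g a = g b) (hmk : ∀ a, Quot.mk r (g a) = Quot.mk r a) :
    Nat.card (Quot r) = Nat.card {a // g a = a} :=
  have hgg (a : α) : g (g a) = g a := congrArg (Quot.lift g hg) (hmk a)
  Nat.card_congr
    { toFun := fun x => ⟨Quot.lift g hg x, by induction x using Quot.ind; exact hgg _⟩
      invFun := fun a => Quot.mk r a.1
      left_inv := Quot.ind hmk
      right_inv := fun a => Subtype.ext a.2 }

theorem Nat.card_subtype_prod_or {α β : Type*} [Finite α] [Finite β] {A₁ B₁ : α → Prop}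
    {A₂ B₂ : β → Prop} (h : ∀ a, A₁ a → ¬ B₁ a) :
    Nat.card {x : α × β // A₁ x.1 ∧ A₂ x.2 ∨ B₁ x.1 ∧ B₂ x.2} =
      Nat.card {a // A₁ a} * Nat.card {b // A₂ b} +
        Nat.card {a // B₁ a} * Nat.card {b // B₂ b} := by
  have hdisj : Disjoint (fun x : α × β => A₁ x.1 ∧ A₂ x.2) fun x => B₁ x.1 ∧ B₂ x.2 := by
    simp only [disjoint_iff_inf_le, Pi.inf_apply, Pi.le_def, inf_Prop_eq, le_Prop_eq]
    exact fun x ⟨⟨hA, _⟩, hB, _⟩ => h _ hA hB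
  rw [Nat.card_congr (subtypeOrEquiv _ _ hdisj), Nat.card_sum,
    Nat.card_congr Equiv.subtypeProdEquivProd, Nat.card_prod,
    Nat.card_congr Equiv.subtypeProdEquivProd, Nat.card_prod]

namespace WMG

def Joined (G : WMG) (T : Finset G.E) : G.V → G.V → Prop :=
  Relation.ReflTransGen fun x y => ∃ e ∈ T, G.ends e = (x, y) ∨ G.ends e = (y, x)

namespace Joined

variable {G H : WMG} {T : Finset G.E} {T' : Finset H.E} {u v w : G.V}

theorem refl (u : G.V) : G.Joined T u u := Relation.ReflTransGen.refl

theorem of_eq (h : u = v) : G.Joined T u v := h ▸ refl _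

theorem edge {e : G.E} (he : e ∈ T) : G.Joined T (G.ends e).1 (G.ends e).2 :=
  .single ⟨e, he, .inl rfl⟩

theorem trans (h : G.Joined T u v) (h' : G.Joined T v w) : G.Joined T u w :=
  Relation.ReflTransGen.trans h h'

theorem symm (h : G.Joined T u v) : G.Joined T v u := by
  induction h with
  | refl => exact refl _
  | tail _ hstep ih =>
    obtain ⟨e, he, hends⟩ := hstep
    exact Relation.ReflTransGen.head ⟨e, he, hends.symm⟩ ih

theorem map (f : G.V → H.V) (hf : ∀ e ∈ T, H.Joined T' (f (G.ends e).1) (f (G.ends e).2))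
    (h : G.Joined T u v) : H.Joined T' (f u) (f v) := by
  induction h with
  | refl => exact refl _
  | tail _ hstep ih =>
    obtain ⟨e, he, hends | hends⟩ := hstep <;> have := hf e he <;> rw [hends] at this
    exacts [ih.trans this, ih.trans this.symm]

theorem apply_eq {α : Type*} (f : G.V → α) (hf : ∀ e ∈ T, f (G.ends e).1 = f (G.ends e).2)
    (h : G.Joined T u v) : f u = f v := by
  induction h with
  | refl => rfl
  | tail _ hstep ih =>
    obtain ⟨e, he, hends | hends⟩ := hstep <;> have := hf e he <;> rw [hends] at this
    exacts [ih.trans this, ih.trans this.symm]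

theorem quot_lift {r : G.V → G.V → Prop} (f : G.V → H.V)
    (hr : ∀ a b, r a b → H.Joined T' (f a) (f b))
    (hf : ∀ e ∈ T, H.Joined T' (f (G.ends e).1) (f (G.ends e).2))
    (h : (G.quot r).Joined T (Quot.mk r u) (Quot.mk r v)) : H.Joined T' (f u) (f v) := by
  have hmk (a b : G.V) (hab : Quot.mk r a = Quot.mk r b) : H.Joined T' (f a) (f b) := by
    have := Quot.eqvGen_exact hab
    clear hab
    induction this with
    | rel _ _ h => exact hr _ _ h
    | refl => exact refl _
    | symm _ _ _ ih => exact ih.symm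
    | trans _ _ _ _ _ ih ih' => exact ih.trans ih'
  have hout (a : G.V) : H.Joined T' (f a) (f (Quot.out (Quot.mk r a))) :=
    hmk _ _ (Quot.out_eq _).symm
  have := h.map (G := G.quot r) (fun x : Quot r => f (Quot.out x)) fun e he =>
    ((hout _).symm.trans (hf e he)).trans (hout _)
  exact ((hout u).trans this).trans (hout v).symm

end Joined

theorem card_le_card_add_one_of_forall_joined {G : WMG} {T : Finset G.E}
    (h : ∀ u v, G.Joined T u v) : Fintype.card G.V ≤ T.card + 1 := by
  cases isEmpty_or_nonempty G.V
  · simp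
  let S := SimpleGraph.fromRel fun x y => ∃ e ∈ T, G.ends e = (x, y)
  have hS : S.Connected := by
    refine ⟨fun u v => (SimpleGraph.reachable_iff_reflTransGen u v).mpr ?_⟩
    induction h u v with
    | refl => exact .refl
    | @tail x y _ hstep ih =>
      obtain ⟨e, he, hends⟩ := hstep
      by_cases hxy : x = y
      · exact hxy ▸ ih
      · exact ih.tail ⟨hxy, hends.imp (⟨e, he, ·⟩) (⟨e, he, ·⟩)⟩
  have hedges : S.edgeSet ⊆ T.image fun e => s((G.ends e).1, (G.ends e).2) := by
    rintro ⟨x, y⟩ ⟨-, ⟨e, he, hends⟩ | ⟨e, he, hends⟩⟩ <;>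
      simp only [Finset.coe_image, Set.mem_image, Finset.mem_coe]
    exacts [⟨e, he, by rw [hends]⟩, ⟨e, he, by rw [hends, Sym2.eq_swap]⟩]
  calc Fintype.card G.V = Nat.card G.V := Nat.card_eq_fintype_card.symm
    _ ≤ S.edgeSet.ncard + 1 := by
      rw [← Nat.card_coe_set_eq]; exact hS.card_vert_le_card_edgeSet_add_one
    _ ≤ T.card + 1 := by
      gcongr
      exact (Set.ncard_le_ncard hedges (Finset.finite_toSet _)).trans
        ((Set.ncard_coe_finset _).trans_le Finset.card_image_le)

theorem card_quot (G : WMG) (r : G.V → G.V → Prop) :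
    Fintype.card (G.quot r).V = Nat.card (Quot r) :=
  Nat.card_eq_fintype_card.symm

section Ident2

variable {G : WMG} {T : Finset G.E} {p q : G.V}

theorem card_ident2 (hpq : p ≠ q) : Fintype.card (G.ident2 p q).V = Fintype.card G.V - 1 := by
  have hfix (v : G.V) : (if v = q then p else v) = v ↔ v ≠ q := by
    split_ifs with hv <;> simp [hv, hpq]
  rw [ident2, card_quot,
    Nat.card_quot_eq_card_fixed (fun v => if v = q then p else v)
      (by rintro _ _ ⟨rfl, rfl⟩; simp [hpq])
      (fun v => by split_ifs with hv; exacts [hv ▸ Quot.sound ⟨rfl, rfl⟩, rfl]),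
    Nat.card_congr (Equiv.subtypeEquivRight hfix)]
  simp

theorem isSpanningTree_ident2_iff (hpq : p ≠ q) :
    (G.ident2 p q).IsSpanningTree T ↔
      (∀ x y, (G.ident2 p q).Joined T x y) ∧ T.card = Fintype.card G.V - 2 := by
  unfold IsSpanningTree
  rw [card_ident2 hpq, Nat.sub_sub]
  rfl

theorem IsSpanningTree.not_ident2 (hpq : p ≠ q) (h : G.IsSpanningTree T) :
    ¬ (G.ident2 p q).IsSpanningTree T := fun h' => by
  have := ((isSpanningTree_ident2_iff hpq).mp h').2
  have := h.2
  have := Fintype.one_lt_card_iff.mpr ⟨p, q, hpq⟩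
  omega

end Ident2

section Glue2

variable {G₁ G₂ : WMG} {p₁ q₁ : G₁.V} {p₂ q₂ : G₂.V} {T₁ : Finset G₁.E} {T₂ : Finset G₂.E}

local notation "Γ" => G₁.glue2 G₂ p₁ q₁ p₂ q₂

theorem card_glue2 (hpq₂ : p₂ ≠ q₂) :
    Fintype.card (Γ).V = Fintype.card G₁.V + Fintype.card G₂.V - 2 := by
  let g : G₁.V ⊕ G₂.V → G₁.V ⊕ G₂.V :=
    Sum.elim .inl fun v => if v = p₂ then .inl p₁ else if v = q₂ then .inl q₁ else .inr v
  have hfix (x : G₁.V ⊕ G₂.V) : g x = x ↔ x ∉ ({.inr p₂, .inr q₂} : Finset _) := by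
    rcases x with v | v
    · simp [g]
    · by_cases h₁ : v = p₂ <;> by_cases h₂ : v = q₂ <;> simp_all [g]
  calc _ = Nat.card {x // g x = x} := (card_quot _ _).trans <|
        Nat.card_quot_eq_card_fixed (α := G₁.V ⊕ G₂.V) g
          (by rintro _ _ (⟨rfl, rfl⟩ | ⟨rfl, rfl⟩) <;> simp [g, hpq₂.symm]) fun x => by
            rcases x with v | v
            · rfl
            by_cases h₁ : v = p₂
            · simpa [g, h₁] using Quot.sound (.inl ⟨rfl, rfl⟩)
            by_cases h₂ : v = q₂
            · simpa [g, h₂, hpq₂.symm] using Quot.sound (.inr ⟨rfl, rfl⟩)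
            · simp [g, h₁, h₂]
    _ = _ := by
      rw [Nat.card_congr (Equiv.subtypeEquivRight hfix), Nat.card_eq_fintype_card,
        Fintype.card_subtype_compl, Fintype.card_coe,
        Finset.card_pair (Sum.inr_injective.ne hpq₂), Fintype.card_sum]

theorem card_disjSum_glue2 : @Finset.card (Γ).E (T₁.disjSum T₂) = T₁.card + T₂.card :=
  Finset.card_disjSum _ _

theorem forall_joined_ident2_of_glue2 (h : ∀ x y, (Γ).Joined (T₁.disjSum T₂) x y)
    (x y : (G₁.ident2 p₁ q₁).V) : (G₁.ident2 p₁ q₁).Joined T₁ x y := by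
  induction x using Quot.ind with | _ u => ?_
  induction y using Quot.ind with | _ v => ?_
  refine (h (Quot.mk _ (.inl u)) (Quot.mk _ (.inl v))).quot_lift (H := G₁.ident2 p₁ q₁)
    (Sum.elim (G₁.ident2Map p₁ q₁) fun _ => G₁.ident2Map p₁ q₁ p₁) ?_ ?_
  · rintro _ _ (⟨rfl, rfl⟩ | ⟨rfl, rfl⟩)
    exacts [Joined.refl _, Joined.of_eq (Quot.sound ⟨rfl, rfl⟩).symm]
  · rintro (e | e) he
    exacts [Joined.edge (Finset.inl_mem_disjSum.mp he), Joined.refl _]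

theorem forall_joined_glue2 (h₁ : ∀ u v, G₁.Joined T₁ u v)
    (h₂ : ∀ x y, (G₂.ident2 p₂ q₂).Joined T₂ x y) (x y : (Γ).V) :
    (Γ).Joined (T₁.disjSum T₂) x y := by
  let ι : G₁.V ⊕ G₂.V → (Γ).V := Quot.mk _
  have hp : ι (.inl p₁) = ι (.inr p₂) := Quot.sound (.inl ⟨rfl, rfl⟩)
  have hq : ι (.inl q₁) = ι (.inr q₂) := Quot.sound (.inr ⟨rfl, rfl⟩)
  have hinl (u v : G₁.V) : (Γ).Joined (T₁.disjSum T₂) (ι (.inl u)) (ι (.inl v)) :=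
    (h₁ u v).map (fun w => ι (.inl w)) fun e he =>
      Joined.edge (G := Γ) (e := .inl e) (Finset.inl_mem_disjSum.mpr he)
  have hinr (u v : G₂.V) : (Γ).Joined (T₁.disjSum T₂) (ι (.inr u)) (ι (.inr v)) :=
    (h₂ (Quot.mk _ u) (Quot.mk _ v)).quot_lift (fun w => ι (.inr w))
      (by rintro _ _ ⟨rfl, rfl⟩; exact hp ▸ hq ▸ hinl p₁ q₁) fun e he =>
        Joined.edge (G := Γ) (e := .inr e) (Finset.inr_mem_disjSum.mpr he)
  have hroot (z : (Γ).V) : (Γ).Joined (T₁.disjSum T₂) z (ι (.inl p₁)) := by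
    induction z using Quot.ind with
    | _ z => rcases z with u | u; exacts [hinl u p₁, hp ▸ hinr u p₂]
  exact (hroot x).trans (hroot y).symm

theorem joined_or_joined_of_glue2
    (h : (Γ).Joined (T₁.disjSum T₂) (Quot.mk _ (.inl p₁)) (Quot.mk _ (.inl q₁))) :
    G₁.Joined T₁ p₁ q₁ ∨ G₂.Joined T₂ p₂ q₂ := by
  by_contra! hn
  obtain ⟨hn₁, hn₂⟩ := hn
  -- Otherwise "joined to `p` inside its own piece" is well defined on `Γ` and `T`-invariant.
  let side : (Γ).V → Prop :=
    Quot.lift (Sum.elim (G₁.Joined T₁ · p₁) (G₂.Joined T₂ · p₂)) <| by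
      rintro _ _ (⟨rfl, rfl⟩ | ⟨rfl, rfl⟩)
      · exact propext (iff_of_true (Joined.refl _) (Joined.refl _))
      · exact propext (iff_of_false (mt Joined.symm hn₁) (mt Joined.symm hn₂))
  have hside := h.apply_eq side <| by
    rintro (e | e) he
    · have he := Joined.edge (Finset.inl_mem_disjSum.mp he)
      exact propext ⟨he.symm.trans, he.trans⟩
    · have he := Joined.edge (Finset.inr_mem_disjSum.mp he)
      exact propext ⟨he.symm.trans, he.trans⟩
  exact hn₁ (Eq.mp hside (Joined.refl p₁) : G₁.Joined T₁ q₁ p₁).symm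

theorem IsSpanningTree.glue2_swap (hpq₁ : p₁ ≠ q₁) (hpq₂ : p₂ ≠ q₂)
    (h : (Γ).IsSpanningTree (T₁.disjSum T₂)) :
    (G₂.glue2 G₁ p₂ q₂ p₁ q₁).IsSpanningTree (T₂.disjSum T₁) := by
  let swap : (Γ).V → (G₂.glue2 G₁ p₂ q₂ p₁ q₁).V :=
    Quot.lift (fun x => Quot.mk _ x.swap) <| by
      rintro _ _ (⟨rfl, rfl⟩ | ⟨rfl, rfl⟩)
      exacts [(Quot.sound (.inl ⟨rfl, rfl⟩)).symm, (Quot.sound (.inr ⟨rfl, rfl⟩)).symm]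
  have hswap : Function.Surjective swap := fun y => by
    induction y using Quot.ind with
    | _ x => exact ⟨Quot.mk _ (Sum.swap x), congrArg (Quot.mk _) (Sum.swap_swap (α := G₂.V) x)⟩
  refine ⟨hswap.forall₂.mpr fun x y => Joined.map swap ?_ (h.1 x y), ?_⟩
  · rintro (e | e) he
    · exact Joined.edge (G := G₂.glue2 G₁ p₂ q₂ p₁ q₁) (e := .inr e)
        (Finset.inr_mem_disjSum.mpr (Finset.inl_mem_disjSum.mp he))
    · exact Joined.edge (G := G₂.glue2 G₁ p₂ q₂ p₁ q₁) (e := .inl e)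
        (Finset.inl_mem_disjSum.mpr (Finset.inr_mem_disjSum.mp he))
  · have := h.2
    rw [card_disjSum_glue2, card_glue2 hpq₂] at this
    rw [card_disjSum_glue2, card_glue2 hpq₁]
    omega

theorem isSpanningTree_glue2_of_left (hpq₂ : p₂ ≠ q₂) (h₁ : G₁.IsSpanningTree T₁)
    (h₂ : (G₂.ident2 p₂ q₂).IsSpanningTree T₂) : (Γ).IsSpanningTree (T₁.disjSum T₂) := by
  refine ⟨forall_joined_glue2 h₁.1 h₂.1, ?_⟩
  have hc₁ := h₁.2
  have hc₂ := ((isSpanningTree_ident2_iff hpq₂).mp h₂).2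
  have : 0 < Fintype.card G₁.V := Fintype.card_pos_iff.mpr ⟨p₁⟩
  have := Fintype.one_lt_card_iff.mpr ⟨p₂, q₂, hpq₂⟩
  rw [card_disjSum_glue2, card_glue2 hpq₂]
  omega

theorem isSpanningTree_left_of_glue2 (hpq₁ : p₁ ≠ q₁) (hpq₂ : p₂ ≠ q₂)
    (h : (Γ).IsSpanningTree (T₁.disjSum T₂)) (hpq : G₁.Joined T₁ p₁ q₁) :
    G₁.IsSpanningTree T₁ ∧ (G₂.ident2 p₂ q₂).IsSpanningTree T₂ := by
  have hG₁ (u v : G₁.V) : G₁.Joined T₁ u v :=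
    (forall_joined_ident2_of_glue2 h.1 (Quot.mk _ u) (Quot.mk _ v)).quot_lift id
      (by rintro _ _ ⟨rfl, rfl⟩; exact hpq) fun e he => Joined.edge he
  have hI₂ := forall_joined_ident2_of_glue2 (h.glue2_swap hpq₁ hpq₂).1
  have hc₁ := card_le_card_add_one_of_forall_joined hG₁
  have hc₂ : Fintype.card G₂.V - 1 ≤ T₂.card + 1 :=
    card_ident2 hpq₂ ▸ card_le_card_add_one_of_forall_joined hI₂
  have hc := h.2
  rw [card_disjSum_glue2, card_glue2 hpq₂] at hc
  have := Fintype.one_lt_card_iff.mpr ⟨p₁, q₁, hpq₁⟩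
  have := Fintype.one_lt_card_iff.mpr ⟨p₂, q₂, hpq₂⟩
  exact ⟨⟨hG₁, by omega⟩, (isSpanningTree_ident2_iff hpq₂).mpr ⟨hI₂, by omega⟩⟩

theorem isSpanningTree_glue2_iff (hpq₁ : p₁ ≠ q₁) (hpq₂ : p₂ ≠ q₂) :
    (Γ).IsSpanningTree (T₁.disjSum T₂) ↔
      G₁.IsSpanningTree T₁ ∧ (G₂.ident2 p₂ q₂).IsSpanningTree T₂ ∨
        (G₁.ident2 p₁ q₁).IsSpanningTree T₁ ∧ G₂.IsSpanningTree T₂ := by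
  constructor
  · intro h
    rcases joined_or_joined_of_glue2 (h.1 _ _) with hpq | hpq
    · exact .inl (isSpanningTree_left_of_glue2 hpq₁ hpq₂ h hpq)
    · exact .inr (isSpanningTree_left_of_glue2 hpq₂ hpq₁ (h.glue2_swap hpq₁ hpq₂) hpq).symm
  · rintro (⟨h₁, h₂⟩ | ⟨h₁, h₂⟩)
    · exact isSpanningTree_glue2_of_left hpq₂ h₁ h₂
    · exact (isSpanningTree_glue2_of_left hpq₁ h₂ h₁).glue2_swap hpq₂ hpq₁

end Glue2

end WMG

theorem spanning_trees_of_two_vertex_union_general (G₁ G₂ : WMG)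
    (p₁ q₁ : G₁.V) (p₂ q₂ : G₂.V) (hpq₁ : p₁ ≠ q₁) (hpq₂ : p₂ ≠ q₂) :
    (G₁.glue2 G₂ p₁ q₁ p₂ q₂).t =
      G₁.t * (G₂.ident2 p₂ q₂).t + G₂.t * (G₁.ident2 p₁ q₁).t := by
  calc (G₁.glue2 G₂ p₁ q₁ p₂ q₂).t
      = Nat.card {P : Finset G₁.E × Finset G₂.E //
          (G₁.glue2 G₂ p₁ q₁ p₂ q₂).IsSpanningTree (P.1.disjSum P.2)} :=
        (Nat.card_congr (Finset.sumEquiv.symm.toEquiv.subtypeEquiv fun _ => Iff.rfl)).symm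
    _ = Nat.card {P : Finset G₁.E × Finset G₂.E //
          G₁.IsSpanningTree P.1 ∧ (G₂.ident2 p₂ q₂).IsSpanningTree P.2 ∨
            (G₁.ident2 p₁ q₁).IsSpanningTree P.1 ∧ G₂.IsSpanningTree P.2} :=
        Nat.card_congr (Equiv.subtypeEquivRight fun _ => WMG.isSpanningTree_glue2_iff hpq₁ hpq₂)
    _ = G₁.t * (G₂.ident2 p₂ q₂).t + (G₁.ident2 p₁ q₁).t * G₂.t :=
        Nat.card_subtype_prod_or fun _ h => h.not_ident2 hpq₁
    _ = _ := by rw [Nat.mul_comm (G₁.ident2 p₁ q₁).t]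

/-- If the connected multigraph `G` is the union of two connected subgraphs
`G₁, G₂` sharing exactly two vertices `p, q` (and no edges), then
`t(G) = t(G₁) t(G₂,_{pq}) + t(G₂) t(G₁,_{pq})`. -/
theorem spanning_trees_of_two_vertex_union (G₁ G₂ : WMG)
    (h₁ : G₁.Connected) (h₂ : G₂.Connected)
    (p₁ q₁ : G₁.V) (p₂ q₂ : G₂.V) (hpq₁ : p₁ ≠ q₁) (hpq₂ : p₂ ≠ q₂) :
    (G₁.glue2 G₂ p₁ q₁ p₂ q₂).t =
      G₁.t * (G₂.ident2 p₂ q₂).t + G₂.t * (G₁.ident2 p₁ q₁).t :=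
  spanning_trees_of_two_vertex_union_general G₁ G₂ p₁ q₁ p₂ q₂ hpq₁ hpq₂
end
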